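/- Let T_1, T_2 be π-increasing trees with disjoint vertex sets, with maximum vertices m_1 and m_2 respectively, T_1 irreducible, and v_2 a vertex of T_2 with v_2 < m_1. Set T = splice(T_1, m_1; T_2, v_2). If m_1 > m_2, then T is reducible; more precisely, the m_1-dependence graph of T is the disjoint union of the m_1-dependence graph of T_1 and the v_2-dependence graph of T_2. -/

import Mathlib

open scoped Classical

/-- An unordered increasing tree on a finite set of positive integers,
given by its vertex set and parent function: the root is the minimum vertex
and is fixed by `parent`, and every nonroot vertex has a parent in the tree
with strictly smaller label (so labels increase away from the root). -/
structure ITree : Type where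
  verts : Finset ℕ
  parent : ℕ → ℕ
  pos : ∀ v ∈ verts, 0 < v
  parent_root : ∀ v ∈ verts, (∀ u ∈ verts, v ≤ u) → parent v = v
  parent_lt : ∀ v ∈ verts, ¬(∀ u ∈ verts, v ≤ u) → parent v ∈ verts ∧ parent v < v

/-- `a` is an ancestor of `v` in `T` (this includes `a = v`): some iterate of
the parent function sends `v` to `a`. -/
def Ancestor (T : ITree) (a v : ℕ) : Prop := ∃ k : ℕ, T.parent^[k] v = a

/-- The chain from the root of `T` to `v`: the set of ancestors of `v`. -/
noncomputable def chain (T : ITree) (v : ℕ) : Finset ℕ :=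
  T.verts.filter (fun a => Ancestor T a v)

/-- The number of sons of the vertex `i` in `T`. -/
noncomputable def sons (T : ITree) (i : ℕ) : ℕ :=
  (T.verts.filter (fun v => v ≠ i ∧ T.parent v = i)).card

/-- `R = splice(T₁, v₁; T₂, v₂)`: the increasing tree on the union of the
vertex sets obtained by merging the chain from the root of `T₁` to `v₁` with
the chain from the root of `T₂` to `v₂` into a single increasing chain
(each chain vertex having as parent its predecessor in the merged chain),
all other vertices keeping their parent.  This is exactly the interleaving of
the `v₁`-decomposition of `T₁` and the `v₂`-decomposition of `T₂` so that the
roots along the resulting chain increase. -/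
def IsSplice (T₁ : ITree) (v₁ : ℕ) (T₂ : ITree) (v₂ : ℕ) (R : ITree) : Prop :=
  R.verts = T₁.verts ∪ T₂.verts ∧
  (∀ w ∈ T₁.verts, w ∉ chain T₁ v₁ ∪ chain T₂ v₂ → R.parent w = T₁.parent w) ∧
  (∀ w ∈ T₂.verts, w ∉ chain T₁ v₁ ∪ chain T₂ v₂ → R.parent w = T₂.parent w) ∧
  (∀ w ∈ chain T₁ v₁ ∪ chain T₂ v₂,
    ∀ h : ((chain T₁ v₁ ∪ chain T₂ v₂).filter (· < w)).Nonempty,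
      R.parent w = ((chain T₁ v₁ ∪ chain T₂ v₂).filter (· < w)).max' h)

/-- `π` is a set partition of a set of positive integers: its blocks are
nonempty, consist of positive integers, and are pairwise disjoint. -/
def IsPartition (π : Finset (Finset ℕ)) : Prop :=
  (∀ B ∈ π, B.Nonempty) ∧ (∀ B ∈ π, ∀ b ∈ B, 0 < b) ∧
    (∀ B ∈ π, ∀ B' ∈ π, B ≠ B' → Disjoint B B')

/-- `T` is a `π`-increasing tree: its vertex set is a union of blocks of `π`,
and every block contained in the vertex set forms a chain of ancestors in `T`
(for `i < j` in the same block, `i` is an ancestor of `j`). -/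
def PiIncreasing (π : Finset (Finset ℕ)) (T : ITree) : Prop :=
  (∀ v ∈ T.verts, ∃ B ∈ π, v ∈ B ∧ B ⊆ T.verts) ∧
  (∀ B ∈ π, B ⊆ T.verts → ∀ i ∈ B, ∀ j ∈ B, i ≤ j → Ancestor T i j)

/-- The edge relation of the `v`-dependence graph `G_v(T)` (on the blocks of
`π` contained in `V(T)`): there is an edge from `B` to `B'` when the maximum
`μ` of `B` does not lie on the chain from the root of `T` to `v`, and the
piece of the `v`-decomposition of `T` containing `μ` (as a nonroot vertex) is
rooted at a vertex `a ∈ B'`; the root `a` of that piece is the largest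
ancestor of `v` which is also an ancestor of `μ`. -/
def DepEdge (π : Finset (Finset ℕ)) (T : ITree) (v : ℕ) (B B' : Finset ℕ) : Prop :=
  B ∈ π ∧ B' ∈ π ∧ B ⊆ T.verts ∧ B' ⊆ T.verts ∧
  ∃ hB : B.Nonempty, ¬ Ancestor T (B.max' hB) v ∧
    ∃ a ∈ B', Ancestor T a v ∧ Ancestor T a (B.max' hB) ∧
      ∀ w, Ancestor T w v → Ancestor T w (B.max' hB) → w ≤ a

/-- The `v`-dependence graph `G_v(T)` is connected: any two blocks of `π`
contained in `V(T)` are related by the equivalence closure of the edge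
relation. -/
def DepConnected (π : Finset (Finset ℕ)) (T : ITree) (v : ℕ) : Prop :=
  ∀ B ∈ π, B ⊆ T.verts → ∀ B' ∈ π, B' ⊆ T.verts →
    Relation.EqvGen (DepEdge π T v) B B'


/-! In the splice `T`, the ancestors of `m₁` are exactly the merged chain
`C = chain T₁ m₁ ∪ chain T₂ v₂`, and every vertex off `C` keeps its parent from `T₁` or `T₂`.
So for a vertex `μ` of `Tᵢ` the path from `μ` up to `C` is the same in `T` as in `Tᵢ`, and the
largest common ancestor of `m₁` and `μ` in `T` is the largest common ancestor of `μ` and the base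
point (`m₁` resp. `v₂`) in `Tᵢ`. Hence the edges of `G_{m₁}(T)` are those of `G_{m₁}(T₁)`
together with those of `G_{v₂}(T₂)`; none of them joins a block of `T₁` to a block of `T₂`, so
`G_{m₁}(T)` is disconnected. -/

namespace ITree

variable (T : ITree)

lemma parent_mem_verts {v : ℕ} (hv : v ∈ T.verts) : T.parent v ∈ T.verts := by
  by_cases h : ∀ u ∈ T.verts, v ≤ u
  · rwa [T.parent_root v hv h]
  · exact (T.parent_lt v hv h).1

lemma parent_le {v : ℕ} (hv : v ∈ T.verts) : T.parent v ≤ v := by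
  by_cases h : ∀ u ∈ T.verts, v ≤ u
  · rw [T.parent_root v hv h]
  · exact (T.parent_lt v hv h).2.le

lemma iterate_parent_mem_verts {v : ℕ} (hv : v ∈ T.verts) (k : ℕ) :
    T.parent^[k] v ∈ T.verts := by
  induction k with
  | zero => exact hv
  | succ k ih => rw [Function.iterate_succ_apply']; exact T.parent_mem_verts ih

lemma iterate_parent_le {v : ℕ} (hv : v ∈ T.verts) (k : ℕ) : T.parent^[k] v ≤ v := by
  induction k with
  | zero => exact le_rfl
  | succ k ih =>
    rw [Function.iterate_succ_apply']
    exact (T.parent_le (T.iterate_parent_mem_verts hv k)).trans ih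

end ITree

namespace Ancestor

variable {T : ITree} {a b c v : ℕ}

lemma refl (T : ITree) (v : ℕ) : Ancestor T v v := ⟨0, rfl⟩

lemma parent (T : ITree) (v : ℕ) : Ancestor T (T.parent v) v := ⟨1, rfl⟩

lemma trans (hab : Ancestor T a b) (hbc : Ancestor T b c) : Ancestor T a c := by
  obtain ⟨k, rfl⟩ := hab
  obtain ⟨j, rfl⟩ := hbc
  exact ⟨k + j, Function.iterate_add_apply _ k j c⟩

lemma mem_verts (h : Ancestor T a v) (hv : v ∈ T.verts) : a ∈ T.verts := by
  obtain ⟨k, rfl⟩ := h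
  exact T.iterate_parent_mem_verts hv k

lemma le (h : Ancestor T a v) (hv : v ∈ T.verts) : a ≤ v := by
  obtain ⟨k, rfl⟩ := h
  exact T.iterate_parent_le hv k

lemma parent_of_ne (h : Ancestor T a v) (hne : a ≠ v) : Ancestor T a (T.parent v) := by
  obtain ⟨_ | k, hk⟩ := h
  · exact absurd hk.symm hne
  · exact ⟨k, by rwa [Function.iterate_succ_apply] at hk⟩

lemma of_le (ha : Ancestor T a v) (hb : Ancestor T b v) (hv : v ∈ T.verts) (hab : a ≤ b) :
    Ancestor T a b := by
  obtain ⟨i, rfl⟩ := ha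
  obtain ⟨j, rfl⟩ := hb
  rcases le_total j i with hji | hij
  · exact ⟨i - j, by rw [← Function.iterate_add_apply, Nat.sub_add_cancel hji]⟩
  · have hba : T.parent^[j] v ≤ T.parent^[i] v := by
      rw [← Nat.sub_add_cancel hij, Function.iterate_add_apply]
      exact T.iterate_parent_le (T.iterate_parent_mem_verts hv i) _
    rw [le_antisymm hab hba]
    exact refl T _

end Ancestor

lemma ancestor_of_forall_le {T : ITree} {r : ℕ} (hr : r ∈ T.verts)
    (hmin : ∀ u ∈ T.verts, r ≤ u) : ∀ v ∈ T.verts, Ancestor T r v := by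
  intro v
  induction v using Nat.strong_induction_on with
  | _ v ih =>
    intro hv
    by_cases hroot : ∀ u ∈ T.verts, v ≤ u
    · rw [le_antisymm (hmin v hv) (hroot r hr)]
      exact Ancestor.refl T v
    · obtain ⟨hp, hlt⟩ := T.parent_lt v hv hroot
      exact (ih _ hlt hp).trans (Ancestor.parent T v)

lemma mem_chain_of_forall_le {T : ITree} {r t : ℕ} (hr : r ∈ T.verts)
    (hmin : ∀ u ∈ T.verts, r ≤ u) (ht : t ∈ T.verts) : r ∈ chain T t :=
  Finset.mem_filter.2 ⟨hr, ancestor_of_forall_le hr hmin t ht⟩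

lemma ITree.parent_lt_of_not_ancestor (T : ITree) {t μ : ℕ} (ht : t ∈ T.verts)
    (hμ : μ ∈ T.verts) (hμt : ¬ Ancestor T μ t) : T.parent μ ∈ T.verts ∧ T.parent μ < μ :=
  T.parent_lt μ hμ fun hroot => hμt (ancestor_of_forall_le hμ hroot t ht)

def commonAncestors (T : ITree) (v μ : ℕ) : Set ℕ := {w | Ancestor T w v ∧ Ancestor T w μ}

lemma exists_isGreatest_commonAncestors {T : ITree} {v μ : ℕ} (hv : v ∈ T.verts)
    (hμ : μ ∈ T.verts) : ∃ a, IsGreatest (commonAncestors T v μ) a := by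
  have hroot : ∀ t ∈ T.verts, T.verts.min' ⟨v, hv⟩ ∈ chain T t := fun t ht =>
    mem_chain_of_forall_le (T.verts.min'_mem _) (fun u hu => T.verts.min'_le u hu) ht
  have hne : (chain T v ∩ chain T μ).Nonempty := ⟨_, Finset.mem_inter.2 ⟨hroot v hv, hroot μ hμ⟩⟩
  have hset : commonAncestors T v μ = ↑(chain T v ∩ chain T μ) := by
    ext w
    simp only [commonAncestors, chain, Finset.coe_inter, Finset.coe_filter]
    exact ⟨fun h => ⟨⟨h.1.mem_verts hv, h.1⟩, h.1.mem_verts hv, h.2⟩, fun h => ⟨h.1.2, h.2.2⟩⟩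
  exact ⟨_, hset ▸ (chain T v ∩ chain T μ).isGreatest_max' hne⟩

lemma depEdge_iff_isGreatest {π : Finset (Finset ℕ)} {T : ITree} {v : ℕ} {B B' : Finset ℕ} :
    DepEdge π T v B B' ↔ B ∈ π ∧ B' ∈ π ∧ B ⊆ T.verts ∧ B' ⊆ T.verts ∧
      ∃ hB : B.Nonempty, ¬ Ancestor T (B.max' hB) v ∧
        ∃ a ∈ B', IsGreatest (commonAncestors T v (B.max' hB)) a := by
  simp only [DepEdge, IsGreatest, upperBounds, commonAncestors, Set.mem_ofPred_eq, and_imp,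
    and_assoc]

lemma PiIncreasing.subset_of_mem {π : Finset (Finset ℕ)} {S : ITree} (hS : PiIncreasing π S)
    (hπ : IsPartition π) {B : Finset ℕ} {b : ℕ} (hB : B ∈ π) (hb : b ∈ B)
    (hbS : b ∈ S.verts) : B ⊆ S.verts := by
  obtain ⟨B₀, hB₀, hbB₀, hB₀S⟩ := hS.1 b hbS
  obtain rfl | hne := eq_or_ne B B₀
  · exact hB₀S
  · exact absurd hbB₀ (Finset.disjoint_left.1 (hπ.2.2 B hB B₀ hB₀ hne) hb)

/-- One of the two spliced trees, `S` with base point `t`, as it sits inside `T` seen from `m`. -/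
structure SpliceSide (T : ITree) (m : ℕ) (S : ITree) (t : ℕ) : Prop where
  verts_subset : S.verts ⊆ T.verts
  base_mem : m ∈ T.verts
  mem : t ∈ S.verts
  ancestor_iff : ∀ w ∈ S.verts, Ancestor T w m ↔ Ancestor S w t
  parent_eq : ∀ w ∈ S.verts, ¬ Ancestor S w t → T.parent w = S.parent w

namespace SpliceSide

variable {T S : ITree} {m t : ℕ}

lemma ancestor_of_ancestor (h : SpliceSide T m S t) {μ x : ℕ} (hμ : μ ∈ S.verts)
    (hxt : Ancestor S x t) (hxμ : Ancestor S x μ) : Ancestor T x μ := by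
  induction μ using Nat.strong_induction_on with
  | _ μ ih =>
    by_cases hμt : Ancestor S μ t
    · exact Ancestor.of_le ((h.ancestor_iff x (hxt.mem_verts h.mem)).2 hxt)
        ((h.ancestor_iff μ hμ).2 hμt) h.base_mem (hxμ.le hμ)
    · have hne : x ≠ μ := by rintro rfl; exact hμt hxt
      obtain ⟨hp, hlt⟩ := S.parent_lt_of_not_ancestor h.mem hμ hμt
      refine (ih _ hlt hp (hxμ.parent_of_ne hne)).trans ?_
      rw [← h.parent_eq μ hμ hμt]
      exact Ancestor.parent T μ

lemma exists_le_of_ancestor (h : SpliceSide T m S t) {μ w : ℕ} (hμ : μ ∈ S.verts)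
    (hwm : Ancestor T w m) (hwμ : Ancestor T w μ) : ∃ c ∈ commonAncestors S t μ, w ≤ c := by
  induction μ using Nat.strong_induction_on with
  | _ μ ih =>
    by_cases hμt : Ancestor S μ t
    · exact ⟨μ, ⟨hμt, Ancestor.refl S μ⟩, hwμ.le (h.verts_subset hμ)⟩
    · have hne : w ≠ μ := by rintro rfl; exact hμt ((h.ancestor_iff w hμ).1 hwm)
      obtain ⟨hp, hlt⟩ := S.parent_lt_of_not_ancestor h.mem hμ hμt
      have hwp : Ancestor T w (S.parent μ) := h.parent_eq μ hμ hμt ▸ hwμ.parent_of_ne hne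
      obtain ⟨c, ⟨hct, hcp⟩, hwc⟩ := ih _ hlt hp hwp
      exact ⟨c, ⟨hct, hcp.trans (Ancestor.parent S μ)⟩, hwc⟩

lemma isGreatest_commonAncestors_iff (h : SpliceSide T m S t) {μ a : ℕ} (hμ : μ ∈ S.verts) :
    IsGreatest (commonAncestors T m μ) a ↔ IsGreatest (commonAncestors S t μ) a := by
  obtain ⟨g, hg⟩ := exists_isGreatest_commonAncestors h.mem hμ
  have hgT : IsGreatest (commonAncestors T m μ) g := by
    refine ⟨⟨(h.ancestor_iff g (hg.1.1.mem_verts h.mem)).2 hg.1.1,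
      h.ancestor_of_ancestor hμ hg.1.1 hg.1.2⟩, ?_⟩
    rintro w ⟨hwm, hwμ⟩
    obtain ⟨c, hc, hwc⟩ := h.exists_le_of_ancestor hμ hwm hwμ
    exact hwc.trans (hg.2 hc)
  exact ⟨fun ha => ha.unique hgT ▸ hg, fun ha => ha.unique hg ▸ hgT⟩

lemma depEdge_iff {π : Finset (Finset ℕ)} (h : SpliceSide T m S t)
    (hblocks : ∀ B ∈ π, ∀ b ∈ B, b ∈ S.verts → B ⊆ S.verts) {B B' : Finset ℕ}
    (hB : B ⊆ S.verts) : DepEdge π T m B B' ↔ DepEdge π S t B B' := by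
  have hmax (hne : B.Nonempty) : B.max' hne ∈ S.verts := hB (B.max'_mem hne)
  rw [depEdge_iff_isGreatest, depEdge_iff_isGreatest]
  constructor
  · rintro ⟨hBπ, hB'π, -, -, hne, hnot, a, haB', ha⟩
    rw [h.isGreatest_commonAncestors_iff (hmax hne)] at ha
    exact ⟨hBπ, hB'π, hB, hblocks B' hB'π a haB' (ha.1.1.mem_verts h.mem), hne,
      fun hS => hnot ((h.ancestor_iff _ (hmax hne)).2 hS), a, haB', ha⟩
  · rintro ⟨hBπ, hB'π, -, hB'S, hne, hnot, a, haB', ha⟩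
    rw [← h.isGreatest_commonAncestors_iff (hmax hne)] at ha
    exact ⟨hBπ, hB'π, hB.trans h.verts_subset, hB'S.trans h.verts_subset, hne,
      fun hT => hnot ((h.ancestor_iff _ (hmax hne)).1 hT), a, haB', ha⟩

end SpliceSide

lemma depEdge_iff_or_of_spliceSide {π : Finset (Finset ℕ)} {T T₁ T₂ : ITree} {m t₁ t₂ : ℕ}
    (hπ : IsPartition π) (hp₁ : PiIncreasing π T₁) (hp₂ : PiIncreasing π T₂)
    (hverts : T.verts = T₁.verts ∪ T₂.verts)
    (h₁ : SpliceSide T m T₁ t₁) (h₂ : SpliceSide T m T₂ t₂) {B B' : Finset ℕ} :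
    DepEdge π T m B B' ↔ DepEdge π T₁ t₁ B B' ∨ DepEdge π T₂ t₂ B B' := by
  have e₁ : B ⊆ T₁.verts → (DepEdge π T m B B' ↔ DepEdge π T₁ t₁ B B') :=
    h₁.depEdge_iff fun _ hB _ hb => hp₁.subset_of_mem hπ hB hb
  have e₂ : B ⊆ T₂.verts → (DepEdge π T m B B' ↔ DepEdge π T₂ t₂ B B') :=
    h₂.depEdge_iff fun _ hB _ hb => hp₂.subset_of_mem hπ hB hb
  constructor
  · intro hE
    have hBπ : B ∈ π := hE.1
    obtain ⟨b, hb⟩ := hπ.1 B hBπ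
    rcases Finset.mem_union.1 (hverts ▸ hE.2.2.1 hb) with hb₁ | hb₂
    · exact Or.inl ((e₁ (hp₁.subset_of_mem hπ hBπ hb hb₁)).1 hE)
    · exact Or.inr ((e₂ (hp₂.subset_of_mem hπ hBπ hb hb₂)).1 hE)
  · rintro (hE | hE)
    · exact (e₁ hE.2.2.1).2 hE
    · exact (e₂ hE.2.2.1).2 hE

lemma not_depConnected_of_depEdge {π : Finset (Finset ℕ)} {T T₁ T₂ : ITree} {m t₁ t₂ : ℕ}
    (hπ : IsPartition π) (hp₁ : PiIncreasing π T₁) (hp₂ : PiIncreasing π T₂)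
    (hdisj : Disjoint T₁.verts T₂.verts) (hS₁ : T₁.verts ⊆ T.verts) (hS₂ : T₂.verts ⊆ T.verts)
    (hne₁ : T₁.verts.Nonempty) (hne₂ : T₂.verts.Nonempty)
    (hedge : ∀ B B', DepEdge π T m B B' → DepEdge π T₁ t₁ B B' ∨ DepEdge π T₂ t₂ B B') :
    ¬ DepConnected π T m := by
  intro hcon
  obtain ⟨b₁, hb₁⟩ := hne₁
  obtain ⟨b₂, hb₂⟩ := hne₂
  obtain ⟨B₁, hB₁π, -, hB₁⟩ := hp₁.1 b₁ hb₁
  obtain ⟨B₂, hB₂π, -, hB₂⟩ := hp₂.1 b₂ hb₂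
  have hnot : ∀ B ∈ π, B ⊆ T₂.verts → ¬ B ⊆ T₁.verts := fun B hB h₂ h₁ =>
    let ⟨b, hb⟩ := hπ.1 B hB
    Finset.disjoint_left.1 hdisj (h₁ hb) (h₂ hb)
  have hside : ∀ B B', DepEdge π T m B B' → (B ⊆ T₁.verts ↔ B' ⊆ T₁.verts) := by
    intro B B' hE
    rcases hedge B B' hE with ⟨-, -, hB, hB', -⟩ | ⟨hBπ, hB'π, hB, hB', -⟩
    · exact iff_of_true hB hB'
    · exact iff_of_false (hnot B hBπ hB) (hnot B' hB'π hB')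
  have hiff : Equivalence fun X Y : Finset ℕ => (X ⊆ T₁.verts ↔ Y ⊆ T₁.verts) :=
    ⟨fun _ => Iff.rfl, Iff.symm, Iff.trans⟩
  have h₁₂ := hiff.eqvGen_iff.1
    (Relation.EqvGen.mono hside _ _ (hcon B₁ hB₁π (hB₁.trans hS₁) B₂ hB₂π (hB₂.trans hS₂)))
  exact hnot B₂ hB₂π hB₂ (h₁₂.1 hB₁)

section MergedChain

variable {T : ITree} {C : Finset ℕ}
  (hmerge : ∀ w ∈ C, ∀ h : (C.filter (· < w)).Nonempty, T.parent w = (C.filter (· < w)).max' h)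
include hmerge

lemma ancestor_of_mem_of_le {x c : ℕ} (hx : x ∈ C) (hc : c ∈ C) (hxc : x ≤ c) :
    Ancestor T x c := by
  induction c using Nat.strong_induction_on with
  | _ c ih =>
    obtain rfl | hlt := hxc.eq_or_lt
    · exact Ancestor.refl T x
    · have hpred : (C.filter (· < c)).Nonempty := ⟨x, Finset.mem_filter.2 ⟨hx, hlt⟩⟩
      obtain ⟨hpC, hpc⟩ := Finset.mem_filter.1 ((C.filter (· < c)).max'_mem hpred)
      refine (ih _ hpc hpC (Finset.le_max' _ x (Finset.mem_filter.2 ⟨hx, hlt⟩))).trans ?_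
      rw [← hmerge c hc hpred]
      exact Ancestor.parent T c

lemma mem_of_ancestor_of_mem {r : ℕ} (hr : r ∈ C) (hroot : ∀ u ∈ T.verts, r ≤ u)
    (hCT : C ⊆ T.verts) {x c : ℕ} (hc : c ∈ C) (hxc : Ancestor T x c) : x ∈ C := by
  have hstep : ∀ c ∈ C, T.parent c ∈ C := by
    intro c hc
    by_cases hpred : (C.filter (· < c)).Nonempty
    · rw [hmerge c hc hpred]
      exact (Finset.mem_filter.1 ((C.filter (· < c)).max'_mem hpred)).1
    · have hcr : c = r := le_antisymm
        (not_lt.1 fun hrc => hpred ⟨r, Finset.mem_filter.2 ⟨hr, hrc⟩⟩) (hroot c (hCT hc))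
      rwa [T.parent_root c (hCT hc) (hcr ▸ hroot)]
  obtain ⟨k, rfl⟩ := hxc
  induction k with
  | zero => exact hc
  | succ k ih => rw [Function.iterate_succ_apply']; exact hstep _ ih

end MergedChain

section Splice

variable {T₁ T₂ T : ITree} {m₁ v₂ : ℕ}

lemma mem_chain_union_iff_left {S₁ S₂ : ITree} {t₁ t₂ w : ℕ} (hdisj : Disjoint S₁.verts S₂.verts)
    (hw : w ∈ S₁.verts) : w ∈ chain S₁ t₁ ∪ chain S₂ t₂ ↔ Ancestor S₁ w t₁ := by
  simp [chain, hw, Finset.disjoint_left.1 hdisj hw]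

lemma IsSplice.ancestor_iff (hspl : IsSplice T₁ m₁ T₂ v₂ T) (hm₁ : m₁ ∈ T₁.verts)
    (hv₂ : v₂ ∈ T₂.verts) (hle₁ : ∀ u ∈ T₁.verts, u ≤ m₁) (hle₂ : ∀ u ∈ T₂.verts, u ≤ m₁)
    (x : ℕ) : Ancestor T x m₁ ↔ x ∈ chain T₁ m₁ ∪ chain T₂ v₂ := by
  obtain ⟨hverts, -, -, hmerge⟩ := hspl
  have hCT : chain T₁ m₁ ∪ chain T₂ v₂ ⊆ T.verts := hverts ▸
    Finset.union_subset_union (Finset.filter_subset _ _) (Finset.filter_subset _ _)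
  have hm₁C : m₁ ∈ chain T₁ m₁ ∪ chain T₂ v₂ :=
    Finset.mem_union_left _ (Finset.mem_filter.2 ⟨hm₁, Ancestor.refl T₁ m₁⟩)
  have hTne : T.verts.Nonempty := ⟨m₁, hCT hm₁C⟩
  set r := T.verts.min' hTne
  have hrT : r ∈ T.verts := T.verts.min'_mem hTne
  have hroot : ∀ u ∈ T.verts, r ≤ u := fun u hu => T.verts.min'_le u hu
  have hrC : r ∈ chain T₁ m₁ ∪ chain T₂ v₂ := by
    rcases Finset.mem_union.1 (hverts ▸ hrT) with hr | hr
    · exact Finset.mem_union_left _ <| mem_chain_of_forall_le hr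
        (fun u hu => hroot u (hverts ▸ Finset.mem_union_left _ hu)) hm₁
    · exact Finset.mem_union_right _ <| mem_chain_of_forall_le hr
        (fun u hu => hroot u (hverts ▸ Finset.mem_union_right _ hu)) hv₂
  refine ⟨mem_of_ancestor_of_mem hmerge hrC hroot hCT hm₁C, fun hx => ?_⟩
  refine ancestor_of_mem_of_le hmerge hx hm₁C ?_
  rcases Finset.mem_union.1 hx with hx | hx
  · exact hle₁ x (Finset.mem_filter.1 hx).1
  · exact hle₂ x (Finset.mem_filter.1 hx).1

lemma IsSplice.spliceSide_left (hspl : IsSplice T₁ m₁ T₂ v₂ T)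
    (hdisj : Disjoint T₁.verts T₂.verts) (hm₁ : m₁ ∈ T₁.verts) (hv₂ : v₂ ∈ T₂.verts)
    (hle₁ : ∀ u ∈ T₁.verts, u ≤ m₁) (hle₂ : ∀ u ∈ T₂.verts, u ≤ m₁) :
    SpliceSide T m₁ T₁ m₁ where
  verts_subset := hspl.1 ▸ Finset.subset_union_left
  base_mem := hspl.1 ▸ Finset.mem_union_left _ hm₁
  mem := hm₁
  ancestor_iff w hw := by
    rw [hspl.ancestor_iff hm₁ hv₂ hle₁ hle₂, mem_chain_union_iff_left hdisj hw]
  parent_eq w hw hnot := hspl.2.1 w hw ((mem_chain_union_iff_left hdisj hw).not.2 hnot)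

lemma IsSplice.spliceSide_right (hspl : IsSplice T₁ m₁ T₂ v₂ T)
    (hdisj : Disjoint T₁.verts T₂.verts) (hm₁ : m₁ ∈ T₁.verts) (hv₂ : v₂ ∈ T₂.verts)
    (hle₁ : ∀ u ∈ T₁.verts, u ≤ m₁) (hle₂ : ∀ u ∈ T₂.verts, u ≤ m₁) :
    SpliceSide T m₁ T₂ v₂ where
  verts_subset := hspl.1 ▸ Finset.subset_union_right
  base_mem := hspl.1 ▸ Finset.mem_union_left _ hm₁
  mem := hv₂
  ancestor_iff w hw := by
    rw [hspl.ancestor_iff hm₁ hv₂ hle₁ hle₂, Finset.union_comm,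
      mem_chain_union_iff_left hdisj.symm hw]
  parent_eq w hw hnot := hspl.2.2.1 w hw <| by
    rwa [Finset.union_comm, mem_chain_union_iff_left hdisj.symm hw]

end Splice

theorem splice_reducible_general (π : Finset (Finset ℕ)) (T₁ T₂ T : ITree) (m₁ m₂ v₂ : ℕ)
    (hπ : IsPartition π) (h₁ : PiIncreasing π T₁) (h₂ : PiIncreasing π T₂)
    (hdisj : Disjoint T₁.verts T₂.verts)
    (hm₁ : m₁ ∈ T₁.verts) (hm₁max : ∀ u ∈ T₁.verts, u ≤ m₁)
    (hm₂max : ∀ u ∈ T₂.verts, u ≤ m₂)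
    (hv₂ : v₂ ∈ T₂.verts) (hm : m₂ < m₁)
    (hspl : IsSplice T₁ m₁ T₂ v₂ T) :
    ¬ DepConnected π T m₁ ∧
    (∀ B B' : Finset ℕ,
      DepEdge π T m₁ B B' ↔ (DepEdge π T₁ m₁ B B' ∨ DepEdge π T₂ v₂ B B')) := by
  have hle₂ : ∀ u ∈ T₂.verts, u ≤ m₁ := fun u hu => (hm₂max u hu).trans hm.le
  have hside₁ := hspl.spliceSide_left hdisj hm₁ hv₂ hm₁max hle₂
  have hside₂ := hspl.spliceSide_right hdisj hm₁ hv₂ hm₁max hle₂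
  have hedge (B B' : Finset ℕ) :
      DepEdge π T m₁ B B' ↔ (DepEdge π T₁ m₁ B B' ∨ DepEdge π T₂ v₂ B B') :=
    depEdge_iff_or_of_spliceSide hπ h₁ h₂ hspl.1 hside₁ hside₂
  exact ⟨not_depConnected_of_depEdge hπ h₁ h₂ hdisj hside₁.verts_subset hside₂.verts_subset
    ⟨m₁, hm₁⟩ ⟨v₂, hv₂⟩ fun B B' => (hedge B B').1, hedge⟩

/-- **Lemma 3.5(a) of Féray–Goulden–Lascoux.**  Let `T₁`, `T₂` be
`π`-increasing trees with disjoint vertex sets and maximum vertices `m₁`,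
`m₂`, with `T₁` irreducible, and let `v₂` be a vertex of `T₂` with
`v₂ < m₁`.  If `m₁ > m₂`, then `T = splice(T₁, m₁; T₂, v₂)` is reducible;
more precisely, its `m₁`-dependence graph is the disjoint union of the
`m₁`-dependence graph of `T₁` and the `v₂`-dependence graph of `T₂`. -/
theorem splice_reducible (π : Finset (Finset ℕ)) (T₁ T₂ T : ITree) (m₁ m₂ v₂ : ℕ)
    (hπ : IsPartition π) (h₁ : PiIncreasing π T₁) (h₂ : PiIncreasing π T₂)
    (hdisj : Disjoint T₁.verts T₂.verts)
    (hm₁ : m₁ ∈ T₁.verts) (hm₁max : ∀ u ∈ T₁.verts, u ≤ m₁)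
    (hm₂ : m₂ ∈ T₂.verts) (hm₂max : ∀ u ∈ T₂.verts, u ≤ m₂)
    (hirr₁ : DepConnected π T₁ m₁)
    (hv₂ : v₂ ∈ T₂.verts) (hv₂lt : v₂ < m₁) (hm : m₂ < m₁)
    (hspl : IsSplice T₁ m₁ T₂ v₂ T) :
    ¬ DepConnected π T m₁ ∧
    (∀ B B' : Finset ℕ,
      DepEdge π T m₁ B B' ↔ (DepEdge π T₁ m₁ B B' ∨ DepEdge π T₂ v₂ B B')) :=
  splice_reducible_general π T₁ T₂ T m₁ m₂ v₂ hπ h₁ h₂ hdisj hm₁ hm₁max hm₂max hv₂ hm hspl
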